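/- Let φ = c_1 ∧ … ∧ c_m be a 3-CNF formula over variables x_1, …, x_n (each clause c_j a set of three literals), with n ≥ 1 and m ≥ 1, and let G_φ and S be as follows: V(G_φ) = {x̂_i} ∪ {x_i} ∪ {x̄_i} (1 ≤ i ≤ n) ∪ {c_j : 1 ≤ j ≤ m} ∪ {a}; edges: x̂_i x_i, x̂_i x̄_i; x_i c_j when literal x_i ∈ c_j and x̄_i c_j when literal x̄_i ∈ c_j; x_1 and x̄_1 each adjacent to all x_i and x̄_i for 2 ≤ i ≤ n; and a adjacent to every x_i, every x̄_i and every c_j; S = {x̂_i : 1 ≤ i ≤ n} ∪ {c_j : 1 ≤ j ≤ m}. If there exists a truth assignment of x_1,…,x_n under which every clause of φ contains a true literal, then G_φ contains two internally disjoint trees connecting S. -/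

import Mathlib

open SimpleGraph

/-- `F` is an internally disjoint family of trees connecting `S` in `G`:
each member is a subgraph of `G` that is a tree containing all of `S`, the members are
pairwise edge-disjoint, and any two distinct members intersect exactly in `S`. -/
def IsIDTrees {V : Type*} (G : SimpleGraph V) (S : Set V) {ι : Type*} (F : ι → G.Subgraph) : Prop :=
  (∀ i, S ⊆ (F i).verts ∧ ((F i).coe).IsTree) ∧
    ∀ i j, i ≠ j → (F i).verts ∩ (F j).verts = S ∧ Disjoint (F i).edgeSet (F j).edgeSet

/-- Vertices of the graph `G_φ` built from a 3-CNF formula with `n` variables and `m`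
clauses: `xhat i` is `x̂_i`, `lit true i` is the literal `x_i`, `lit false i` is the
literal `x̄_i`, `clause j` is `c_j`, and `a` is the extra vertex. -/
inductive SatVert (n m : ℕ) where
  | xhat (i : Fin n)
  | lit (b : Bool) (i : Fin n)
  | clause (j : Fin m)
  | a

/-- Base adjacency of `G_φ`, where a clause `c j` is the set of its (at most three)
literals, a literal being a pair `(b, i)` standing for `x_i` if `b = true` and for
`x̄_i` if `b = false`. The vertices `x_1, x̄_1` (index `0`) are joined to all `x_i, x̄_i`
with `i ≥ 2` (index `≠ 0`), and `a` is joined to all literal and clause vertices. -/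
def satRel {n m : ℕ} (c : Fin m → Finset (Bool × Fin n)) :
    SatVert n m → SatVert n m → Prop
  | .xhat i, .lit _ i' => i = i'
  | .lit b i, .clause j => (b, i) ∈ c j
  | .lit _ i, .lit _ i' => i.val = 0 ∧ i'.val ≠ 0
  | .a, .lit _ _ => True
  | .a, .clause _ => True
  | _, _ => False

/-- The graph `G_φ` of the 3-SAT reduction. -/
def satGraph {n m : ℕ} (c : Fin m → Finset (Bool × Fin n)) : SimpleGraph (SatVert n m) :=
  SimpleGraph.fromRel (satRel c)

/-- The set `S = {x̂_i : 1 ≤ i ≤ n} ∪ {c_j : 1 ≤ j ≤ m}`. -/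
def satS (n m : ℕ) : Set (SatVert n m) :=
  Set.range SatVert.xhat ∪ Set.range SatVert.clause

/-!
Fix a satisfying assignment `t`. The first tree lives on `S` and the true literals: the true
literal at index `0` is joined to every other true literal (which `G_φ` allows, since `x_1, x̄_1`
see all `x_i, x̄_i` with `i ≥ 2`), each `x̂_i` hangs off its true literal and each clause off one
of its true literals. The second tree lives on `S`, the false literals and `a`: `a` is joined to
every false literal and every clause, and each `x̂_i` hangs off its false literal. The two vertex
sets meet exactly in `S`, and since `S` is independent in `G_φ` no edge can lie in both trees.
-/

namespace SimpleGraph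

variable {V β : Type*} [LinearOrder β]

/-- Take a vertex of maximal rank on a cycle: its two cycle neighbours both have rank at most its
own, so they coincide. -/
theorem isAcyclic_of_lower_neighbor_unique {H : SimpleGraph V} (rank : V → β)
    (huniq : ∀ ⦃u v w⦄, H.Adj u v → H.Adj u w → rank v ≤ rank u → rank w ≤ rank u →
      v = w) :
    H.IsAcyclic := by
  classical
  intro v₀ c hc
  obtain ⟨u, hu, hmax⟩ := c.support.toFinset.exists_max_image rank ⟨v₀, by simp⟩
  rw [List.mem_toFinset] at hu
  have hc' := hc.rotate hu
  have hle : ∀ w ∈ (c.rotate u hu).support, rank w ≤ rank u := fun w hw =>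
    hmax w (List.mem_toFinset.mpr ((c.mem_support_rotate_iff u hu).mp hw))
  exact hc'.snd_ne_penultimate <| huniq (Walk.adj_snd hc'.not_nil)
    (Walk.adj_penultimate hc'.not_nil).symm (hle _ (Walk.getVert_mem_support _ _))
    (hle _ (Walk.getVert_mem_support _ _))

theorem connected_of_forall_exists_adj_lt [WellFoundedLT β] {H : SimpleGraph V} (r : V)
    (rank : V → β) (hdesc : ∀ v, v ≠ r → ∃ w, H.Adj v w ∧ rank w < rank v) : H.Connected := by
  have hreach (v : V) : H.Reachable v r := by
    induction v using (InvImage.wf rank wellFounded_lt).induction with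
    | h v ih =>
      by_cases hv : v = r
      · exact hv ▸ Reachable.refl v
      · obtain ⟨w, hvw, hlt⟩ := hdesc v hv
        exact hvw.reachable.trans (ih w hlt)
  have : Nonempty V := ⟨r⟩
  exact .mk fun u v => (hreach u).trans (hreach v).symm

variable {G : SimpleGraph V}

def Subgraph.ofParent (W : Set V) (r : V) (p : V → V)
    (hp : ∀ v ∈ W, v ≠ r → p v ∈ W ∧ G.Adj v (p v)) : G.Subgraph where
  verts := W
  Adj u v := (u ∈ W ∧ u ≠ r ∧ p u = v) ∨ (v ∈ W ∧ v ≠ r ∧ p v = u)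
  adj_sub := by
    rintro u v (⟨hu, hur, rfl⟩ | ⟨hv, hvr, rfl⟩)
    exacts [(hp u hu hur).2, (hp v hv hvr).2.symm]
  edge_vert := by
    rintro u v (⟨hu, -, -⟩ | ⟨hv, hvr, rfl⟩)
    exacts [hu, (hp v hv hvr).1]
  symm := ⟨fun _ _ h => h.symm⟩

theorem Subgraph.isTree_coe_ofParent [WellFoundedLT β] {W : Set V} {r : V} {p : V → V}
    {hp : ∀ v ∈ W, v ≠ r → p v ∈ W ∧ G.Adj v (p v)} (hr : r ∈ W) (rank : V → β)
    (hlt : ∀ v ∈ W, v ≠ r → rank (p v) < rank v) : (ofParent W r p hp).coe.IsTree := by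
  refine ⟨connected_of_forall_exists_adj_lt ⟨r, hr⟩ (rank ∘ Subtype.val) ?_,
    isAcyclic_of_lower_neighbor_unique (rank ∘ Subtype.val) ?_⟩
  · rintro ⟨v, hv⟩ hvr
    have hvr : v ≠ r := fun h => hvr (Subtype.ext h)
    exact ⟨⟨p v, (hp v hv hvr).1⟩, Or.inl ⟨hv, hvr, rfl⟩, hlt v hv hvr⟩
  · have lower_eq_parent :
        ∀ u v, (ofParent W r p hp).Adj u v → rank v ≤ rank u → v = p u := by
      rintro u v (⟨-, -, rfl⟩ | ⟨hv, hvr, rfl⟩) hle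
      · rfl
      · exact absurd (hlt v hv hvr) hle.not_gt
    rintro ⟨u, _⟩ ⟨v, _⟩ ⟨w, _⟩ huv huw hv hw
    exact Subtype.ext ((lower_eq_parent u v huv hv).trans (lower_eq_parent u w huw hw).symm)

theorem Subgraph.disjoint_edgeSet_of_isIndepSet_inter {H₁ H₂ : G.Subgraph}
    (h : G.IsIndepSet (H₁.verts ∩ H₂.verts)) : Disjoint H₁.edgeSet H₂.edgeSet := by
  rw [Set.disjoint_left]
  rintro ⟨u, v⟩ h₁ h₂
  exact h ⟨H₁.edge_vert h₁, H₂.edge_vert h₂⟩ ⟨H₁.edge_vert h₁.symm, H₂.edge_vert h₂.symm⟩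
    (H₁.adj_sub h₁).ne (H₁.adj_sub h₁)

end SimpleGraph

theorem isIDTrees_pair {V : Type*} {G : SimpleGraph V} {S : Set V} {H₁ H₂ : G.Subgraph}
    (h₁ : H₁.coe.IsTree) (h₂ : H₂.coe.IsTree) (hS : H₁.verts ∩ H₂.verts = S)
    (hind : G.IsIndepSet S) : IsIDTrees G S ![H₁, H₂] := by
  have hdisj := Subgraph.disjoint_edgeSet_of_isIndepSet_inter (hS ▸ hind)
  refine ⟨fun i => ?_, fun i j hij => ?_⟩
  · fin_cases i
    exacts [⟨hS ▸ Set.inter_subset_left, h₁⟩, ⟨hS ▸ Set.inter_subset_right, h₂⟩]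
  · fin_cases i <;> fin_cases j <;> simp at hij ⊢
    exacts [⟨hS, hdisj⟩, ⟨Set.inter_comm .. ▸ hS, hdisj.symm⟩]

namespace SatVert

variable {n m : ℕ}

theorem isIndepSet_satS (c : Fin m → Finset (Bool × Fin n)) :
    (satGraph c).IsIndepSet (satS n m) := by
  rintro u (⟨i, rfl⟩ | ⟨j, rfl⟩) v (⟨i', rfl⟩ | ⟨j', rfl⟩) - <;> simp [satGraph, satRel]

variable {c : Fin m → Finset (Bool × Fin n)} (t : Fin n → Bool)

def trueTreeVerts : Set (SatVert n m) := satS n m ∪ Set.range fun i => lit (t i) i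

def falseTreeVerts : Set (SatVert n m) :=
  insert a (satS n m ∪ Set.range fun i => lit (!t i) i)

theorem trueTreeVerts_inter_falseTreeVerts :
    trueTreeVerts (m := m) t ∩ falseTreeVerts t = satS n m := by
  ext v
  cases v <;> simp [trueTreeVerts, falseTreeVerts, satS]

def trueTreeParent (i₀ : Fin n) (f : Fin m → Bool × Fin n) : SatVert n m → SatVert n m
  | xhat i => lit (t i) i
  | lit _ _ => lit (t i₀) i₀
  | clause j => lit (f j).1 (f j).2
  | a => a

def trueTreeRank (i₀ : Fin n) : SatVert n m → ℕ
  | lit _ i => if i = i₀ then 0 else 1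
  | _ => 2

theorem trueTreeParent_spec {i₀ : Fin n} (h₀ : (i₀ : ℕ) = 0) {f : Fin m → Bool × Fin n}
    (hf : ∀ j, f j ∈ c j) (hft : ∀ j, t (f j).2 = (f j).1) :
    ∀ v ∈ trueTreeVerts t, v ≠ lit (t i₀) i₀ →
      trueTreeParent t i₀ f v ∈ trueTreeVerts t ∧
        (satGraph c).Adj v (trueTreeParent t i₀ f v) := by
  rintro v ((⟨i, rfl⟩ | ⟨j, rfl⟩) | ⟨i, rfl⟩) hv
  · simp [trueTreeParent, trueTreeVerts, satGraph, satRel]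
  · simp [trueTreeParent, trueTreeVerts, satGraph, satRel, hf, hft]
  · have hi : (i : ℕ) ≠ 0 := fun h => hv (by rw [Fin.ext (h.trans h₀.symm)])
    refine ⟨Or.inr ⟨i₀, rfl⟩, ?_⟩
    simp [trueTreeParent, satGraph, satRel, Fin.ext_iff, h₀, hi]

theorem trueTreeRank_parent_lt (i₀ : Fin n) (f : Fin m → Bool × Fin n) :
    ∀ v ∈ trueTreeVerts t, v ≠ lit (t i₀) i₀ →
      trueTreeRank i₀ (trueTreeParent t i₀ f v) < trueTreeRank i₀ v := by
  rintro v ((⟨i, rfl⟩ | ⟨j, rfl⟩) | ⟨i, rfl⟩) hv <;>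
    simp only [trueTreeParent, trueTreeRank] at hv ⊢ <;> split_ifs <;> simp_all

def falseTreeParent : SatVert n m → SatVert n m
  | xhat i => lit (!t i) i
  | _ => a

def falseTreeRank : SatVert n m → ℕ
  | xhat _ => 2
  | a => 0
  | _ => 1

theorem falseTreeParent_spec :
    ∀ v ∈ falseTreeVerts t, v ≠ a →
      falseTreeParent t v ∈ falseTreeVerts t ∧ (satGraph c).Adj v (falseTreeParent t v) := by
  rintro v (rfl | (⟨i, rfl⟩ | ⟨j, rfl⟩) | ⟨i, rfl⟩) hv <;>
    simp_all [falseTreeParent, falseTreeVerts, satGraph, satRel]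

theorem falseTreeRank_parent_lt :
    ∀ v : SatVert n m, v ∈ falseTreeVerts t → v ≠ a →
      falseTreeRank (falseTreeParent t v) < falseTreeRank v := by
  rintro v (rfl | (⟨i, rfl⟩ | ⟨j, rfl⟩) | ⟨i, rfl⟩) hv <;>
    simp_all [falseTreeParent, falseTreeRank]

variable (c)

def trueTree {i₀ : Fin n} (h₀ : (i₀ : ℕ) = 0) {f : Fin m → Bool × Fin n}
    (hf : ∀ j, f j ∈ c j) (hft : ∀ j, t (f j).2 = (f j).1) : (satGraph c).Subgraph :=
  .ofParent (trueTreeVerts t) (lit (t i₀) i₀) (trueTreeParent t i₀ f)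
    (trueTreeParent_spec t h₀ hf hft)

def falseTree : (satGraph c).Subgraph :=
  .ofParent (falseTreeVerts t) a (falseTreeParent t) (falseTreeParent_spec t)

theorem isTree_coe_trueTree {i₀ : Fin n} (h₀ : (i₀ : ℕ) = 0) {f : Fin m → Bool × Fin n}
    (hf : ∀ j, f j ∈ c j) (hft : ∀ j, t (f j).2 = (f j).1) :
    (trueTree c t h₀ hf hft).coe.IsTree :=
  Subgraph.isTree_coe_ofParent (Or.inr ⟨i₀, rfl⟩) (trueTreeRank i₀)
    (trueTreeRank_parent_lt t i₀ f)

theorem isTree_coe_falseTree : (falseTree c t).coe.IsTree :=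
  Subgraph.isTree_coe_ofParent (Set.mem_insert a _) falseTreeRank (falseTreeRank_parent_lt t)

end SatVert

open SatVert in
theorem sat_trees_of_satisfiable_general (n m : ℕ) (hn : 1 ≤ n)
    (c : Fin m → Finset (Bool × Fin n))
    (t : Fin n → Bool) (ht : ∀ j, ∃ l ∈ c j, t l.2 = l.1) :
    ∃ F : Fin 2 → (satGraph c).Subgraph, IsIDTrees (satGraph c) (satS n m) F := by
  choose f hf hft using ht
  have h₀ : ((⟨0, hn⟩ : Fin n) : ℕ) = 0 := rfl
  exact ⟨![trueTree c t h₀ hf hft, falseTree c t],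
    isIDTrees_pair (isTree_coe_trueTree c t h₀ hf hft) (isTree_coe_falseTree c t)
      (trueTreeVerts_inter_falseTreeVerts t) (isIndepSet_satS c)⟩

/-- If the 3-CNF formula `φ` is satisfiable, then `G_φ` contains two internally disjoint
trees connecting `S`. -/
theorem sat_trees_of_satisfiable (n m : ℕ) (hn : 1 ≤ n) (hm : 1 ≤ m)
    (c : Fin m → Finset (Bool × Fin n)) (hc : ∀ j, (c j).card = 3)
    (t : Fin n → Bool) (ht : ∀ j, ∃ l ∈ c j, t l.2 = l.1) :
    ∃ F : Fin 2 → (satGraph c).Subgraph, IsIDTrees (satGraph c) (satS n m) F :=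
  sat_trees_of_satisfiable_general n m hn c t ht
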